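/- arXiv:1711.04337 — 4 statements merged into one kernel-verified Lean document; each statement's English description precedes it below -/
import Mathlib

section
/- Let G be a compact connected abelian group with probability Haar measure μ_G, and let A, B be nonempty compact subsets of G. Then μ_G(A + B) ≥ min(μ_G(A) + μ_G(B), 1), where A + B = {a + b : a ∈ A, b ∈ B}. -/
/-!
Put `K = closure (A + B)`. Among the pairs `(A', B')` of closed sets with `B'` nonempty,
`A' + B' ⊆ K` and `μ A + μ B ≤ μ A' + μ B'`, ordered by enlarging `A'` and shrinking `B'`, Zorn's
lemma yields a maximal pair: along a chain the `B'` are compact, so their intersection is nonempty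
and, by outer regularity, has the infimal measure. Dyson's transform
`(A' ∪ (e + B'), B' ∩ (A' - e))`, `e = a - b` with `a ∈ A'`, `b ∈ B'`, stays in this class, so at
a maximal pair `A' + (B' - B') ⊆ A'`. If `μ B' = 0`, then `μ K ≥ μ (A' + b) = μ A' ≥ μ A + μ B`.
Otherwise `B' - B'` is a neighbourhood of `0` by Steinhaus' theorem, which makes `A'` clopen,
hence equal to `G` by connectedness.
-/

open MeasureTheory Set Pointwise Filter Topology OrderDual
open scoped ENNReal

theorem measure_iInter_eq_iInf_of_directed_isClosed {X ι : Type*} [TopologicalSpace X]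
    [CompactSpace X] [MeasurableSpace X] [Nonempty ι] (μ : Measure X) [μ.OuterRegular]
    {f : ι → Set X} (hdir : Directed (· ⊇ ·) f) (hf : ∀ i, IsClosed (f i)) :
    μ (⋂ i, f i) = ⨅ i, μ (f i) := by
  refine le_antisymm (le_iInf fun i => measure_mono (iInter_subset f i)) ?_
  rw [Set.measure_eq_iInf_isOpen]
  refine le_iInf₂ fun U hfU => le_iInf fun hU => ?_
  obtain ⟨i, hi⟩ := hU.isClosed_compl.isCompact.elim_directed_family_closed f hf
    (by rwa [inter_comm, ← sdiff_eq, sdiff_eq_empty]) hdir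
  rw [inter_comm, ← sdiff_eq, sdiff_eq_empty] at hi
  exact (iInf_le _ i).trans (measure_mono hi)

theorem closure_add_closure_subset {G : Type*} [Add G] [TopologicalSpace G] [ContinuousAdd G]
    (s t : Set G) : closure s + closure t ⊆ closure (s + t) := by
  rintro _ ⟨a, ha, b, hb, rfl⟩
  exact map_mem_closure₂ continuous_add ha hb fun _ ha _ hb => add_mem_add ha hb

theorem eq_univ_of_add_subset_self {G : Type*} [AddGroup G] [TopologicalSpace G]
    [IsTopologicalAddGroup G] [ConnectedSpace G] {A V : Set G} (hA : A.Nonempty)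
    (hV : V ∈ 𝓝 0) (hAV : A + V ⊆ A) : A = univ := by
  refine IsClopen.eq_univ ⟨?_, ?_⟩ hA
  · refine isOpen_compl_iff.1 (isOpen_iff_mem_nhds.2 fun x hx => ?_)
    refine mem_of_superset (singleton_add_mem_nhds_of_nhds_zero x (neg_mem_nhds_zero G hV)) ?_
    rintro _ ⟨_, rfl, w, hw, rfl⟩ hxw
    exact hx (by simpa using hAV (add_mem_add hxw hw))
  · refine isOpen_iff_mem_nhds.2 fun a ha => ?_
    exact mem_of_superset (singleton_add_mem_nhds_of_nhds_zero a hV)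
      ((add_subset_add_right (singleton_subset_iff.2 ha)).trans hAV)

section KneserPair

variable {G : Type*} [AddCommGroup G] [TopologicalSpace G] [MeasurableSpace G]
  {μ : Measure G} {K : Set G} {c : ℝ≥0∞}

structure IsKneserPair (μ : Measure G) (K : Set G) (c : ℝ≥0∞) (A B : Set G) : Prop where
  isClosed_left : IsClosed A
  isClosed_right : IsClosed B
  nonempty_right : B.Nonempty
  add_subset : A + B ⊆ K
  le_measure_add : c ≤ μ A + μ B

theorem IsKneserPair.union_vadd_inter_vadd [IsTopologicalAddGroup G] [BorelSpace G]
    [μ.IsAddLeftInvariant] {A B : Set G} (h : IsKneserPair μ K c A B) {a b : G} (ha : a ∈ A)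
    (hb : b ∈ B) : IsKneserPair μ K c (A ∪ ((a - b) +ᵥ B)) (B ∩ ((b - a) +ᵥ A)) where
  isClosed_left := h.isClosed_left.union (h.isClosed_right.vadd _)
  isClosed_right := h.isClosed_right.inter (h.isClosed_left.vadd _)
  nonempty_right := ⟨b, hb, a, ha, by simp⟩
  add_subset := by
    rw [union_add]
    refine union_subset ((add_subset_add_left inter_subset_left).trans h.add_subset) ?_
    rintro _ ⟨_, ⟨b', hb', rfl⟩, _, ⟨-, ⟨a', ha', rfl⟩⟩, rfl⟩
    convert h.add_subset (add_mem_add ha' hb') using 1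
    simp only [vadd_eq_add]
    abel
  le_measure_add := by
    have hX : MeasurableSet ((a - b) +ᵥ B) := (h.isClosed_right.vadd _).measurableSet
    have hB' : μ (B ∩ ((b - a) +ᵥ A)) = μ (A ∩ ((a - b) +ᵥ B)) := by
      rw [← measure_vadd μ (a - b), vadd_set_inter, vadd_vadd, inter_comm]
      simp
    calc c ≤ μ A + μ B := h.le_measure_add
      _ = μ A + μ ((a - b) +ᵥ B) := by rw [measure_vadd]
      _ = μ (A ∪ ((a - b) +ᵥ B)) + μ (B ∩ ((b - a) +ᵥ A)) := by
        rw [hB', measure_union_add_inter A hX]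

theorem isKneserPair_closure_iUnion_iInter [CompactSpace G] [ContinuousAdd G] [μ.OuterRegular]
    {ι : Type*} [Nonempty ι] {A B : ι → Set G}
    (h : ∀ i, IsKneserPair μ K c (A i) (B i)) (hdir : Directed (· ⊇ ·) B) (hK : IsClosed K) :
    IsKneserPair μ K c (closure (⋃ i, A i)) (⋂ i, B i) where
  isClosed_left := isClosed_closure
  isClosed_right := isClosed_iInter fun i => (h i).isClosed_right
  nonempty_right := IsCompact.nonempty_iInter_of_directed_nonempty_isCompact_isClosed B hdir
    (fun i => (h i).nonempty_right) (fun i => (h i).isClosed_right.isCompact)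
    (fun i => (h i).isClosed_right)
  add_subset := by
    have hsub : (⋃ i, A i) + ⋂ i, B i ⊆ K := by
      rw [iUnion_add]
      exact iUnion_subset fun i =>
        (add_subset_add_left (iInter_subset B i)).trans (h i).add_subset
    calc closure (⋃ i, A i) + ⋂ i, B i
        ⊆ closure (⋃ i, A i) + closure (⋂ i, B i) := add_subset_add_left subset_closure
      _ ⊆ closure ((⋃ i, A i) + ⋂ i, B i) := closure_add_closure_subset _ _
      _ ⊆ K := closure_minimal hsub hK
  le_measure_add := by
    rw [measure_iInter_eq_iInf_of_directed_isClosed μ hdir fun i => (h i).isClosed_right,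
      ENNReal.add_iInf]
    exact le_iInf fun i => (h i).le_measure_add.trans
      (add_le_add_left (measure_mono ((subset_iUnion A i).trans subset_closure)) _)

def kneserPairs (μ : Measure G) (K : Set G) (c : ℝ≥0∞) : Set (Set G × (Set G)ᵒᵈ) :=
  {p | IsKneserPair μ K c p.1 (ofDual p.2)}

theorem IsKneserPair.exists_maximal [CompactSpace G] [ContinuousAdd G] [μ.OuterRegular]
    {A B : Set G} (h : IsKneserPair μ K c A B) (hK : IsClosed K) :
    ∃ A₁ B₁, A ⊆ A₁ ∧ Maximal (· ∈ kneserPairs μ K c) (A₁, toDual B₁) := by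
  suffices ∃ p, (A, toDual B) ≤ p ∧ Maximal (· ∈ kneserPairs μ K c) p by
    obtain ⟨⟨A₁, B₁⟩, hle, hmax⟩ := this
    exact ⟨A₁, ofDual B₁, hle.1, hmax⟩
  refine zorn_le_nonempty₀ _ (fun C hC hchain p hp => ?_) _ h
  have : Nonempty C := ⟨⟨p, hp⟩⟩
  have hdir : Directed (· ⊇ ·) fun q : C => ofDual q.1.2 :=
    (hchain.mono_rel fun _ _ hle => hle.2).directed
  exact ⟨(closure (⋃ q : C, q.1.1), toDual (⋂ q : C, ofDual q.1.2)),
    isKneserPair_closure_iUnion_iInter (fun q => hC q.2) hdir hK,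
    fun q hq => ⟨(subset_iUnion (fun q : C => q.1.1) ⟨q, hq⟩).trans subset_closure,
      iInter_subset (fun q : C => ofDual q.1.2) ⟨q, hq⟩⟩⟩

theorem add_sub_subset_of_maximal_kneserPairs [IsTopologicalAddGroup G] [BorelSpace G]
    [μ.IsAddLeftInvariant] {A B : Set G}
    (hmax : Maximal (· ∈ kneserPairs μ K c) (A, toDual B)) : A + (B - B) ⊆ A := by
  rintro _ ⟨a, ha, _, ⟨b', hb', b, hb, rfl⟩, rfl⟩
  have hle :
      ((A ∪ ((a - b) +ᵥ B), toDual (B ∩ ((b - a) +ᵥ A))) : Set G × (Set G)ᵒᵈ) ≤ (A, toDual B) :=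
    hmax.2 (IsKneserPair.union_vadd_inter_vadd hmax.1 ha hb) ⟨subset_union_left, inter_subset_left⟩
  refine hle.1 (subset_union_right ⟨b', hb', ?_⟩)
  simp only [vadd_eq_add]
  abel

end KneserPair

theorem min_add_le_measure_of_isClosed {G : Type*} [AddCommGroup G] [TopologicalSpace G]
    [IsTopologicalAddGroup G] [CompactSpace G] [ConnectedSpace G] [MeasurableSpace G]
    [BorelSpace G] (μ : Measure G) [μ.IsAddHaarMeasure] [IsProbabilityMeasure μ]
    {A B K : Set G} (hA : A.Nonempty) (hB : B.Nonempty) (hAc : IsClosed A) (hBc : IsClosed B)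
    (hK : IsClosed K) (hABK : A + B ⊆ K) : min (μ A + μ B) 1 ≤ μ K := by
  obtain ⟨A₁, B₁, hAA₁, hmax⟩ :=
    (⟨hAc, hBc, hB, hABK, le_rfl⟩ : IsKneserPair μ K (μ A + μ B) A B).exists_maximal hK
  have h₁ : IsKneserPair μ K (μ A + μ B) A₁ B₁ := hmax.1
  obtain ⟨b₀, hb₀⟩ := h₁.nonempty_right
  have hA₁K : μ A₁ ≤ μ K := by
    rw [← measure_vadd μ b₀]
    exact measure_mono
      ((vadd_set_subset_add hb₀).trans ((add_comm B₁ A₁).trans_le h₁.add_subset))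
  rcases eq_or_ne (μ B₁) 0 with hB₁ | hB₁
  · calc min (μ A + μ B) 1 ≤ μ A₁ + μ B₁ := (min_le_left _ _).trans h₁.le_measure_add
      _ ≤ μ K := by rwa [hB₁, add_zero]
  · have hB₁nhds : B₁ - B₁ ∈ 𝓝 0 := Measure.sub_mem_nhds_zero_of_addHaar_pos μ B₁
      h₁.isClosed_right.measurableSet (pos_iff_ne_zero.2 hB₁)
    have hA₁ : A₁ = univ :=
      eq_univ_of_add_subset_self (hA.mono hAA₁) hB₁nhds
        (add_sub_subset_of_maximal_kneserPairs hmax)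
    calc min (μ A + μ B) 1 ≤ μ A₁ := by rw [hA₁, measure_univ]; exact min_le_right _ _
      _ ≤ μ K := hA₁K

theorem kneser_inequality {G : Type*} [AddCommGroup G] [TopologicalSpace G]
    [IsTopologicalAddGroup G] [CompactSpace G] [ConnectedSpace G]
    [MeasurableSpace G] [BorelSpace G]
    (μ : Measure G) [μ.IsAddHaarMeasure] [IsProbabilityMeasure μ]
    (A B : Set G) (hA : A.Nonempty) (hB : B.Nonempty)
    (hAc : IsCompact A) (hBc : IsCompact B) :
    min ((μ A).toReal + (μ B).toReal) 1 ≤ (μ (A + B)).toReal := by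
  have h : min (μ A + μ B) 1 ≤ μ (A + B) := by
    have := min_add_le_measure_of_isClosed μ hA.closure hB.closure isClosed_closure
      isClosed_closure isClosed_closure (closure_add_closure_subset A B)
    rwa [hAc.measure_closure, hBc.measure_closure, (hAc.add hBc).measure_closure] at this
  have := ENNReal.toReal_mono (measure_ne_top μ _) h
  rwa [ENNReal.toReal_min (by finiteness) ENNReal.one_ne_top,
    ENNReal.toReal_add (measure_ne_top μ _) (measure_ne_top μ _), ENNReal.toReal_one] at this
end

section
/- Let G be a compact abelian group with probability Haar measure μ_G, let B ⊆ G be measurable, let t ≥ 0, and for measurable A define c(A) := ∫_G min(1_A * 1_B, t) dμ_G − t(μ_G(A) + μ_G(B) − t). Then for all measurable A₁, A₂ ⊆ G one has c(A₁) + c(A₂) ≥ c(A₁ ∩ A₂) + c(A₁ ∪ A₂). -/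
open MeasureTheory Set Filter
open scoped symmDiff Topology

/-!
Since `1_A * 1_B (x) = μ (A ∩ (x - B))`, the convolution is, for each `x`, a monotone modular
function of `A`; truncating it at `t` keeps it submodular (`min_add_min_le_min_add_min`), and so
does integrating in `x`. The correction term `t (μ A + μ B - t)` is modular in `A`. Integrability
of the truncated convolution comes from its continuity in `x`, a consequence of the continuity of
translation in measure.
-/

lemma min_add_min_le_min_add_min {α : Type*} [AddCommMonoid α] [LinearOrder α]
    [IsOrderedAddMonoid α] {a b c d t : α} (h : c + d = a + b) (hca : c ≤ a) (hcb : c ≤ b) :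
    min c t + min d t ≤ min a t + min b t := by
  rcases le_total t a with hta | hat
  · rw [min_eq_right hta, add_comm (min c t)]
    exact add_le_add (min_le_right d t) (min_le_min_right t hcb)
  rcases le_total t b with htb | hbt
  · rw [min_eq_right htb]
    exact add_le_add (min_le_min_right t hca) (min_le_right d t)
  rw [min_eq_left hat, min_eq_left hbt, ← h]
  exact add_le_add (min_le_left c t) (min_le_left d t)

section
variable {α : Type*} {m : MeasurableSpace α} (μ : Measure α) [IsFiniteMeasure μ]

lemma measureReal_inter_le_inter_add_symmDiff (A S T : Set α) :
    μ.real (A ∩ S) ≤ μ.real (A ∩ T) + μ.real (S ∆ T) := by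
  calc μ.real (A ∩ S) ≤ μ.real (A ∩ T ∪ S ∆ T) := by
        refine measureReal_mono fun y ⟨hA, hS⟩ => ?_
        by_cases hT : y ∈ T
        · exact Or.inl ⟨hA, hT⟩
        · exact Or.inr (Or.inl ⟨hS, hT⟩)
    _ ≤ μ.real (A ∩ T) + μ.real (S ∆ T) := measureReal_union_le _ _

lemma abs_measureReal_inter_sub_le_symmDiff (A S T : Set α) :
    |μ.real (A ∩ S) - μ.real (A ∩ T)| ≤ μ.real (S ∆ T) := by
  have h₁ := measureReal_inter_le_inter_add_symmDiff μ A S T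
  have h₂ := measureReal_inter_le_inter_add_symmDiff μ A T S
  rw [symmDiff_comm] at h₂
  exact abs_sub_le_iff.mpr ⟨by linarith, by linarith⟩

lemma integral_min_add_integral_min_le {f₁ f₂ g h : α → ℝ} (t : ℝ)
    (hf₁ : Integrable f₁ μ) (hf₂ : Integrable f₂ μ) (hg : Integrable g μ) (hh : Integrable h μ)
    (hsum : ∀ x, g x + h x = f₁ x + f₂ x) (hg₁ : g ≤ f₁) (hg₂ : g ≤ f₂) :
    ∫ x, min (g x) t ∂μ + ∫ x, min (h x) t ∂μ ≤ ∫ x, min (f₁ x) t ∂μ + ∫ x, min (f₂ x) t ∂μ := by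
  have hmin : ∀ {f : α → ℝ}, Integrable f μ → Integrable (fun x => min (f x) t) μ :=
    fun hf => hf.inf (integrable_const t)
  rw [← integral_add (hmin hg) (hmin hh), ← integral_add (hmin hf₁) (hmin hf₂)]
  exact integral_mono ((hmin hg).add (hmin hh)) ((hmin hf₁).add (hmin hf₂))
    fun x => min_add_min_le_min_add_min (hsum x) (hg₁ x) (hg₂ x)

end

section
variable {G : Type*} [AddGroup G] [TopologicalSpace G] [IsTopologicalAddGroup G]
  [MeasurableSpace G] [BorelSpace G]

lemma integral_indicator_mul_indicator_sub (μ : Measure G) {A B : Set G}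
    (hA : MeasurableSet A) (hB : MeasurableSet B) (x : G) :
    ∫ y, A.indicator 1 y * B.indicator 1 (x - y) ∂μ = μ.real (A ∩ (x - ·) ⁻¹' B) := by
  rw [← integral_indicator_one (hA.inter (measurable_const_sub x hB)), inter_indicator_one]
  rfl

lemma continuous_measureReal_inter_preimage_sub_left (μ : Measure G) [IsFiniteMeasure μ]
    [μ.InnerRegularCompactLTTop] [μ.IsAddLeftInvariant] [μ.IsNegInvariant]
    (A : Set G) {B : Set G} (hB : MeasurableSet B) :
    Continuous fun x => μ.real (A ∩ (x - ·) ⁻¹' B) := by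
  let φ : C(G, C(G, G)) := ContinuousMap.curry ⟨fun p : G × G => p.1 - p.2, continuous_sub⟩
  refine continuous_iff_continuousAt.mpr fun x₀ => ?_
  have hsymmDiff := tendsto_measure_symmDiff_preimage_nhds_zero (μ := μ) (ν := μ)
    (φ.continuous.tendsto x₀) (.of_forall fun x => Measure.measurePreserving_sub_left μ x)
    (Measure.measurePreserving_sub_left μ x₀) hB.nullMeasurableSet (measure_ne_top μ B)
  have hsymmDiff_real : Tendsto (fun x => μ.real (((x - ·) ⁻¹' B) ∆ ((x₀ - ·) ⁻¹' B)))
      (𝓝 x₀) (𝓝 0) :=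
    (ENNReal.tendsto_toReal ENNReal.zero_ne_top).comp hsymmDiff
  rw [ContinuousAt, tendsto_iff_norm_sub_tendsto_zero]
  exact squeeze_zero (fun _ => norm_nonneg _)
    (fun x => abs_measureReal_inter_sub_le_symmDiff μ A _ _) hsymmDiff_real

end

theorem submodularity_c_general {G : Type*} [AddCommGroup G] [TopologicalSpace G]
    [IsTopologicalAddGroup G] [CompactSpace G]
    [MeasurableSpace G] [BorelSpace G]
    (μ : Measure G) [μ.IsAddHaarMeasure] [IsProbabilityMeasure μ]
    (B : Set G) (hB : MeasurableSet B) (t : ℝ)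
    (c : Set G → ℝ)
    (hc : ∀ A : Set G, c A =
      (∫ x, min (∫ y, A.indicator 1 y * B.indicator 1 (x - y) ∂μ) t ∂μ)
        - t * ((μ A).toReal + (μ B).toReal - t))
    (A₁ A₂ : Set G) (hA₁ : MeasurableSet A₁) (hA₂ : MeasurableSet A₂) :
    c (A₁ ∩ A₂) + c (A₁ ∪ A₂) ≤ c A₁ + c A₂ := by
  set F : Set G → G → ℝ := fun A x => μ.real (A ∩ (x - ·) ⁻¹' B)
  have hF : ∀ A, Integrable (F A) μ := fun A =>
    (continuous_measureReal_inter_preimage_sub_left μ A hB).integrable_of_hasCompactSupport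
      (.of_compactSpace _)
  have hFsum : ∀ x, F (A₁ ∩ A₂) x + F (A₁ ∪ A₂) x = F A₁ x + F A₂ x := fun x => by
    simp only [F]
    rw [add_comm, union_inter_distrib_right, inter_inter_distrib_right]
    exact measureReal_union_add_inter (hA₂.inter (measurable_const_sub x hB))
  have hconv := integral_min_add_integral_min_le μ t (hF A₁) (hF A₂) (hF _) (hF _) hFsum
    (fun _ => measureReal_mono (inter_subset_inter_left _ inter_subset_left))
    (fun _ => measureReal_mono (inter_subset_inter_left _ inter_subset_right))
  have hmeas : μ.real (A₁ ∩ A₂) + μ.real (A₁ ∪ A₂) = μ.real A₁ + μ.real A₂ := by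
    rw [add_comm]
    exact measureReal_union_add_inter hA₂
  simp only [hc, ← measureReal_def,
    integral_indicator_mul_indicator_sub μ hA₁ hB, integral_indicator_mul_indicator_sub μ hA₂ hB,
    integral_indicator_mul_indicator_sub μ (hA₁.inter hA₂) hB,
    integral_indicator_mul_indicator_sub μ (hA₁.union hA₂) hB]
  simp only [F] at hconv
  linear_combination hconv - t * hmeas

theorem submodularity_c {G : Type*} [AddCommGroup G] [TopologicalSpace G]
    [IsTopologicalAddGroup G] [CompactSpace G]
    [MeasurableSpace G] [BorelSpace G]
    (μ : Measure G) [μ.IsAddHaarMeasure] [IsProbabilityMeasure μ]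
    (B : Set G) (hB : MeasurableSet B) (t : ℝ) (ht : 0 ≤ t)
    (c : Set G → ℝ)
    (hc : ∀ A : Set G, c A =
      (∫ x, min (∫ y, A.indicator 1 y * B.indicator 1 (x - y) ∂μ) t ∂μ)
        - t * ((μ A).toReal + (μ B).toReal - t))
    (A₁ A₂ : Set G) (hA₁ : MeasurableSet A₁) (hA₂ : MeasurableSet A₂) :
    c (A₁ ∩ A₂) + c (A₁ ∪ A₂) ≤ c A₁ + c A₂ :=
  submodularity_c_general μ B hB t c hc A₁ A₂ hA₁ hA₂
end

section
/- Let G be a compact connected abelian group with probability Haar measure μ_G, let A ⊆ G be measurable, and let t be a real number with μ_G(A)² ≤ t ≤ μ_G(A). Then there exists x ∈ G such that μ_G(A ∩ (x + A)) = t. -/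
/-!
The function `g x = μ (A ∩ (x +ᵥ A))` is continuous, equals `μ A` at `0`, and its minimum is at
most `μ A ^ 2`; connectedness of `G` and the intermediate value theorem then give every value in
between. The bound on the minimum would follow from `g` having mean `μ A ^ 2`, but that cannot be
proved by Fubini directly: without second countability the map `(x, y) ↦ y - x` need not be
measurable for the product σ-algebra. Instead `A` is squeezed between a closed set `K` and a
continuous Urysohn function `f`, for which Fubini does hold: the autocorrelation of `f` has mean
`(∫ f) ^ 2`, and it dominates `μ (K ∩ (x +ᵥ K))`.
-/

open MeasureTheory Set Pointwise Filter Topology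
open scoped symmDiff

section Measure

variable {α : Type*} [MeasurableSpace α] (μ : Measure α) [IsFiniteMeasure μ]

lemma abs_measureReal_inter_sub_le (s t u : Set α) :
    |μ.real (s ∩ t) - μ.real (s ∩ u)| ≤ μ.real (t ∆ u) := by
  have key : ∀ t u : Set α, μ.real (s ∩ t) ≤ μ.real (s ∩ u) + μ.real (t ∆ u) := fun t u ↦
    calc μ.real (s ∩ t) ≤ μ.real (s ∩ u ∪ t ∆ u) := measureReal_mono fun y hy ↦ by
          by_cases h : y ∈ u
          · exact .inl ⟨hy.1, h⟩
          · exact .inr (.inl ⟨hy.2, h⟩)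
      _ ≤ _ := measureReal_union_le _ _
  rw [abs_sub_le_iff]
  refine ⟨by linarith [key t u], ?_⟩
  have := key u t
  rw [symmDiff_comm] at this
  linarith

lemma measureReal_inter_le_add_sdiff (s t s' t' : Set α) :
    μ.real (s ∩ t) ≤ μ.real (s' ∩ t') + μ.real (s \ s') + μ.real (t \ t') :=
  calc μ.real (s ∩ t) ≤ μ.real (s' ∩ t' ∪ s \ s' ∪ t \ t') := measureReal_mono fun y hy ↦ by
        by_cases h : y ∈ s' <;> by_cases h' : y ∈ t' <;> simp_all
    _ ≤ _ := (measureReal_union_le _ _).trans (by gcongr; exact measureReal_union_le _ _)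

end Measure

lemma exists_continuous_eqOn_one_integral_le {X : Type*} [TopologicalSpace X] [RegularSpace X]
    [LocallyCompactSpace X] [MeasurableSpace X] [BorelSpace X] (μ : Measure X)
    [IsFiniteMeasure μ] [μ.OuterRegular] {K : Set X} (hK : IsCompact K) {δ : ℝ} (hδ : 0 < δ) :
    ∃ f : C(X, ℝ), EqOn f 1 K ∧ (∀ x, f x ∈ Icc 0 1) ∧ ∫ x, f x ∂μ ≤ μ.real K + δ := by
  obtain ⟨U, hKU, hU, hμU⟩ := K.exists_isOpen_lt_of_lt (μ K + ENNReal.ofReal δ)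
    (ENNReal.lt_add_right (measure_ne_top μ K) (by simpa using hδ))
  obtain ⟨f, hfK, hfU, hf_supp, hf01⟩ := exists_continuous_one_zero_of_isCompact hK
    hU.isClosed_compl (disjoint_compl_right.mono_left hKU)
  refine ⟨f, hfK, hf01, ?_⟩
  have hf_le : ∀ x, f x ≤ U.indicator 1 x := fun x ↦ by
    by_cases hx : x ∈ U
    · simpa [hx] using (hf01 x).2
    · simp [hx, hfU hx]
  calc ∫ x, f x ∂μ ≤ ∫ x, U.indicator 1 x ∂μ :=
        integral_mono (f.continuous.integrable_of_hasCompactSupport hf_supp)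
          ((integrable_const 1).indicator hU.measurableSet) hf_le
    _ = μ.real U := integral_indicator_one hU.measurableSet
    _ ≤ μ.real K + δ := by
        rw [measureReal_def, measureReal_def, ← ENNReal.toReal_ofReal hδ.le,
          ← ENNReal.toReal_add (measure_ne_top μ K) ENNReal.ofReal_ne_top]
        exact ENNReal.toReal_mono (by finiteness) hμU.le

lemma continuous_measureReal_inter_vadd {G : Type*} [AddGroup G] [TopologicalSpace G]
    [IsTopologicalAddGroup G] [MeasurableSpace G] [BorelSpace G] (μ : Measure G)
    [IsFiniteMeasure μ] [μ.IsAddLeftInvariant] [μ.InnerRegularCompactLTTop]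
    {A : Set G} (hA : MeasurableSet A) :
    Continuous fun x : G ↦ μ.real (A ∩ (x +ᵥ A)) := by
  let shift : C(G, C(G, G)) := ContinuousMap.curry ⟨fun p : G × G ↦ -p.1 + p.2, by fun_prop⟩
  have hshift : ∀ x, x +ᵥ A = shift x ⁻¹' A := fun x ↦ by
    ext y
    simp [shift, mem_vadd_set_iff_neg_vadd_mem]
  rw [continuous_iff_continuousAt]
  intro x₀
  have hsymm : Tendsto (fun x ↦ μ.real ((x +ᵥ A) ∆ (x₀ +ᵥ A))) (𝓝 x₀) (𝓝 0) := by
    simp only [hshift]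
    have := tendsto_measure_symmDiff_preimage_nhds_zero (shift.continuous.tendsto x₀)
      (.of_forall fun x ↦ measurePreserving_add_left μ (-x)) (measurePreserving_add_left μ (-x₀))
      hA.nullMeasurableSet (measure_ne_top μ A)
    exact (ENNReal.tendsto_toReal ENNReal.zero_ne_top).comp this
  refine tendsto_iff_dist_tendsto_zero.2 (squeeze_zero (fun _ ↦ dist_nonneg) (fun x ↦ ?_) hsymm)
  exact abs_measureReal_inter_sub_le μ A _ _

section Autocorrelation

variable {G : Type*} [AddGroup G] [TopologicalSpace G] [IsTopologicalAddGroup G]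
  [CompactSpace G] [MeasurableSpace G] [BorelSpace G] (μ : Measure G)

lemma integrable_integral_mul_sub [IsFiniteMeasure μ] {f g : G → ℝ} (hf : Continuous f)
    (hg : Continuous g) :
    Integrable (fun x ↦ ∫ y, f y * g (y - x) ∂μ) μ := by
  have hF : Continuous fun p : G × G ↦ f p.2 * g (p.2 - p.1) := by fun_prop
  obtain ⟨C, hC⟩ := hF.bounded_above_of_compact_support (.of_compactSpace _)
  refine Integrable.integral_prod_left (f := fun p : G × G ↦ f p.2 * g (p.2 - p.1)) ?_
  exact .of_bound
    ((HasCompactSupport.of_compactSpace _).stronglyMeasurable_of_prod hF).aestronglyMeasurable C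
    (.of_forall hC)

lemma integral_integral_mul_sub [IsFiniteMeasure μ] [μ.IsAddLeftInvariant] [μ.IsNegInvariant]
    {f g : G → ℝ} (hf : Continuous f) (hg : Continuous g) :
    ∫ x, ∫ y, f y * g (y - x) ∂μ ∂μ = (∫ y, f y ∂μ) * ∫ y, g y ∂μ := by
  rw [integral_integral_swap_of_hasCompactSupport (f := fun x y ↦ f y * g (y - x))
    (by fun_prop) (.of_compactSpace _)]
  simp only [integral_const_mul, integral_sub_left_eq_self, integral_mul_const]

lemma exists_integral_mul_sub_le_sq [IsProbabilityMeasure μ] [μ.IsAddLeftInvariant]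
    [μ.IsNegInvariant] {f : G → ℝ} (hf : Continuous f) :
    ∃ x, ∫ y, f y * f (y - x) ∂μ ≤ (∫ y, f y ∂μ) ^ 2 := by
  obtain ⟨x, hx⟩ := exists_le_integral (integrable_integral_mul_sub μ hf hf)
  exact ⟨x, hx.trans (integral_integral_mul_sub μ hf hf ▸ (sq _).ge)⟩

end Autocorrelation

section Compact

variable {G : Type*} [AddCommGroup G] [TopologicalSpace G] [IsTopologicalAddGroup G]
  [CompactSpace G] [MeasurableSpace G] [BorelSpace G] (μ : Measure G)
  [IsProbabilityMeasure μ] [μ.IsAddHaarMeasure]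

lemma exists_measureReal_inter_vadd_le {A : Set G} (hA : MeasurableSet A) {δ : ℝ} (hδ : 0 < δ) :
    ∃ x : G, μ.real (A ∩ (x +ᵥ A)) ≤ (μ.real A + δ) ^ 2 + 2 * δ := by
  obtain ⟨K, hKA, hK, hμK⟩ := hA.exists_isClosed_sdiff_lt (measure_ne_top μ A)
    (ENNReal.ofReal_pos.2 hδ).ne'
  have hAK : μ.real (A \ K) ≤ δ := by
    simpa [measureReal_def, ENNReal.toReal_ofReal hδ.le] using
      ENNReal.toReal_mono ENNReal.ofReal_ne_top hμK.le
  obtain ⟨f, hfK, hf01, hf_int⟩ := exists_continuous_eqOn_one_integral_le μ hK.isCompact hδ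
  obtain ⟨x, hx⟩ := exists_integral_mul_sub_le_sq μ f.continuous
  refine ⟨x, ?_⟩
  have hKK : μ.real (K ∩ (x +ᵥ K)) ≤ ∫ y, f y * f (y - x) ∂μ := by
    have hmeas : MeasurableSet (K ∩ (x +ᵥ K)) :=
      hK.measurableSet.inter (hK.measurableSet.const_vadd x)
    have hone : ∀ y ∈ K ∩ (x +ᵥ K), 1 ≤ f y * f (y - x) := fun y ⟨hyK, hyxK⟩ ↦ by
      rw [mem_vadd_set_iff_neg_vadd_mem, vadd_eq_add, neg_add_eq_sub] at hyxK
      simp [hfK hyK, hfK hyxK]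
    have hint : Integrable (fun y ↦ f y * f (y - x)) μ :=
      (by fun_prop : Continuous fun y ↦ f y * f (y - x)).integrable_of_hasCompactSupport
        (.of_compactSpace _)
    calc μ.real (K ∩ (x +ᵥ K)) ≤ ∫ y in K ∩ (x +ᵥ K), f y * f (y - x) ∂μ := by
          simpa using
            setIntegral_ge_of_const_le_real hmeas (measure_ne_top μ _) hone hint.integrableOn
      _ ≤ ∫ y, f y * f (y - x) ∂μ :=
          setIntegral_le_integral hint (.of_forall fun y ↦ mul_nonneg (hf01 y).1 (hf01 _).1)
  have hf_nonneg : 0 ≤ ∫ y, f y ∂μ := integral_nonneg fun y ↦ (hf01 y).1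
  calc μ.real (A ∩ (x +ᵥ A))
      ≤ μ.real (K ∩ (x +ᵥ K)) + μ.real (A \ K) + μ.real ((x +ᵥ A) \ (x +ᵥ K)) :=
        measureReal_inter_le_add_sdiff μ _ _ _ _
    _ ≤ (∫ y, f y ∂μ) ^ 2 + δ + δ := by
        have hvadd : μ.real (x +ᵥ (A \ K)) = μ.real (A \ K) := by
          simp only [measureReal_def, measure_vadd]
        rw [← vadd_set_sdiff, hvadd]
        gcongr
        exact hKK.trans hx
    _ ≤ (μ.real A + δ) ^ 2 + 2 * δ := by
        have : ∫ y, f y ∂μ ≤ μ.real A + δ :=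
          hf_int.trans (by gcongr; exact measure_ne_top μ A)
        nlinarith

lemma exists_measureReal_inter_vadd_le_sq {A : Set G} (hA : MeasurableSet A) :
    ∃ x : G, μ.real (A ∩ (x +ᵥ A)) ≤ μ.real A ^ 2 := by
  obtain ⟨x₀, -, hx₀⟩ := isCompact_univ.exists_isMinOn univ_nonempty
    (continuous_measureReal_inter_vadd μ hA).continuousOn
  refine ⟨x₀, ge_of_tendsto (f := fun δ : ℝ ↦ (μ.real A + δ) ^ 2 + 2 * δ) (x := 𝓝[>] 0) ?_ ?_⟩
  · have hcont : Continuous fun δ : ℝ ↦ (μ.real A + δ) ^ 2 + 2 * δ := by fun_prop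
    simpa using (hcont.tendsto 0).mono_left nhdsWithin_le_nhds
  · filter_upwards [self_mem_nhdsWithin] with δ hδ
    obtain ⟨x, hx⟩ := exists_measureReal_inter_vadd_le μ hA hδ
    exact (hx₀ (mem_univ x)).trans hx

end Compact

theorem exists_translate_inter_measure {G : Type*} [AddCommGroup G] [TopologicalSpace G]
    [IsTopologicalAddGroup G] [CompactSpace G] [ConnectedSpace G]
    [MeasurableSpace G] [BorelSpace G]
    (μ : Measure G) [μ.IsAddHaarMeasure] [IsProbabilityMeasure μ]
    (A : Set G) (hA : MeasurableSet A)
    (t : ℝ) (ht1 : (μ A).toReal ^ 2 ≤ t) (ht2 : t ≤ (μ A).toReal) :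
    ∃ x : G, (μ (A ∩ (x +ᵥ A))).toReal = t := by
  obtain ⟨x₁, hx₁⟩ := exists_measureReal_inter_vadd_le_sq μ hA
  have h₀ : μ.real (A ∩ ((0 : G) +ᵥ A)) = μ.real A := by simp
  obtain ⟨x, -, hx⟩ := isPreconnected_univ.intermediate_value (mem_univ x₁) (mem_univ 0)
    (continuous_measureReal_inter_vadd μ hA).continuousOn ⟨hx₁.trans ht1, h₀ ▸ ht2⟩
  exact ⟨x, hx⟩
end

section
/- Let G be a compact abelian group, φ : G → ℝ/ℤ a continuous surjective group homomorphism, and I, J compact arcs in ℝ/ℤ. Then φ⁻¹(I) + φ⁻¹(J) = φ⁻¹(I + J), and μ_G(φ⁻¹(I)) = μ_{ℝ/ℤ}(I), μ_G(φ⁻¹(J)) = μ_{ℝ/ℤ}(J), and μ_G(φ⁻¹(I) + φ⁻¹(J)) = μ_{ℝ/ℤ}(I + J). In particular, if μ_{ℝ/ℤ}(I) + μ_{ℝ/ℤ}(J) ≤ 1 then μ_G(φ⁻¹(I) + φ⁻¹(J)) = μ_G(φ⁻¹(I)) + μ_G(φ⁻¹(J)), so equality holds in Kneser's inequality for parallel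 Bohr sets. -/
/-!
By uniqueness of the Haar probability measure, a continuous surjective homomorphism `φ` onto the
circle pushes `μ` forward to `volume`, so `μ (φ ⁻¹' S) = volume S`; surjectivity also makes
`φ ⁻¹'` commute with sumsets. On the circle, the arc `[a, b]` is the closed ball of radius
`(b - a) / 2` about its midpoint, of measure `min 1 (b - a)`, and arcs add like the intervals
they come from, so lengths add as long as their sum stays at most `1`.
-/

open MeasureTheory Set Pointwise

namespace MonoidHom

variable {G H : Type*} [Group G] [Group H]

@[to_additive]
theorem preimage_mul_preimage_of_surjective (f : G →* H) (hf : Function.Surjective f)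
    (s t : Set H) : f ⁻¹' s * f ⁻¹' t = f ⁻¹' (s * t) := by
  refine (preimage_mul_preimage_subset f).antisymm ?_
  rintro x ⟨a, ha, b, hb, hab⟩
  obtain ⟨g, rfl⟩ := hf a
  refine ⟨g, ha, g⁻¹ * x, ?_, mul_inv_cancel_left g x⟩
  rwa [mem_preimage, map_mul, map_inv, ← hab, inv_mul_cancel_left]

end MonoidHom

theorem min_add_eq_min_add_min {p x y : ℝ} (hp : 0 ≤ p) (hx : 0 ≤ x) (hy : 0 ≤ y)
    (h : min p x + min p y ≤ p) : min p (x + y) = min p x + min p y := by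
  simp only [min_def] at h ⊢
  split_ifs at h ⊢ <;> linarith

namespace AddCircle

variable {p : ℝ}

theorem coe_image_closedBall (c r : ℝ) :
    ((↑) : ℝ → AddCircle p) '' Metric.closedBall c r
      = Metric.closedBall (c : AddCircle p) r := by
  refine (image_subset_iff.2 ?_).antisymm ?_
  · rw [coe_real_preimage_closedBall_eq_iUnion]
    exact subset_iUnion_of_subset 0 (by simp)
  · intro y hy
    obtain ⟨x, rfl⟩ := QuotientAddGroup.mk_surjective y
    rw [← mem_preimage, coe_real_preimage_closedBall_eq_iUnion, mem_iUnion] at hy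
    obtain ⟨n, hn⟩ := hy
    refine ⟨x - n • p, ?_, ?_⟩
    · rwa [Metric.mem_closedBall, ← dist_sub_right _ _ (n • p), add_sub_cancel_right] at hn
    · simp [coe_period]

theorem coe_image_Icc_eq_closedBall (a b : ℝ) :
    ((↑) : ℝ → AddCircle p) '' Icc a b
      = Metric.closedBall (((a + b) / 2 : ℝ) : AddCircle p) ((b - a) / 2) := by
  rw [Real.Icc_eq_closedBall, coe_image_closedBall]

theorem coe_image_Icc_add_coe_image_Icc {a b c d : ℝ} (hab : a ≤ b) (hcd : c ≤ d) :
    ((↑) : ℝ → AddCircle p) '' Icc a b + (↑) '' Icc c d = (↑) '' Icc (a + c) (b + d) := by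
  rw [← Icc_add_Icc hab hcd]
  exact (image_add (QuotientAddGroup.mk' (AddSubgroup.zmultiples p))).symm

theorem measurableSet_coe_image_Icc (a b : ℝ) :
    MeasurableSet (((↑) : ℝ → AddCircle p) '' Icc a b) := by
  rw [coe_image_Icc_eq_closedBall]
  exact Metric.isClosed_closedBall.measurableSet

variable [Fact (0 < p)]

theorem volume_coe_image_Icc (a b : ℝ) :
    volume (((↑) : ℝ → AddCircle p) '' Icc a b) = ENNReal.ofReal (min p (b - a)) := by
  rw [coe_image_Icc_eq_closedBall, volume_closedBall, mul_div_cancel₀ _ two_ne_zero]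

theorem toReal_volume_coe_image_Icc {a b : ℝ} (hab : a ≤ b) :
    (volume (((↑) : ℝ → AddCircle p) '' Icc a b)).toReal = min p (b - a) := by
  rw [volume_coe_image_Icc,
    ENNReal.toReal_ofReal (le_min (Fact.out : 0 < p).le (sub_nonneg.2 hab))]

end AddCircle

theorem parallel_bohr_sets_general {G : Type*} [AddCommGroup G] [TopologicalSpace G]
    [IsTopologicalAddGroup G]
    [MeasurableSpace G] [BorelSpace G]
    (μ : Measure G) [μ.IsAddHaarMeasure] [IsProbabilityMeasure μ]
    (φ : G →+ UnitAddCircle) (hφc : Continuous φ) (hφs : Function.Surjective φ)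
    (I J : Set UnitAddCircle)
    (hI : ∃ a b : ℝ, a < b ∧ I = (fun x : ℝ => (x : UnitAddCircle)) '' Set.Icc a b)
    (hJ : ∃ a b : ℝ, a < b ∧ J = (fun x : ℝ => (x : UnitAddCircle)) '' Set.Icc a b) :
    φ ⁻¹' I + φ ⁻¹' J = φ ⁻¹' (I + J) ∧
    μ (φ ⁻¹' I) = volume I ∧
    μ (φ ⁻¹' J) = volume J ∧
    μ (φ ⁻¹' I + φ ⁻¹' J) = volume (I + J) ∧
    ((volume I).toReal + (volume J).toReal ≤ 1 →
      (μ (φ ⁻¹' I + φ ⁻¹' J)).toReal = (μ (φ ⁻¹' I)).toReal + (μ (φ ⁻¹' J)).toReal) := by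
  obtain ⟨a, b, hab, rfl⟩ := hI
  obtain ⟨c, d, hcd, rfl⟩ := hJ
  have hφμ : MeasurePreserving φ μ volume := φ.measurePreserving hφc hφs (by simp)
  have hμ (a b : ℝ) :
      μ (φ ⁻¹' ((↑) '' Icc a b)) = volume (((↑) : ℝ → UnitAddCircle) '' Icc a b) :=
    hφμ.measure_preimage (AddCircle.measurableSet_coe_image_Icc a b).nullMeasurableSet
  rw [φ.preimage_add_preimage_of_surjective hφs,
    AddCircle.coe_image_Icc_add_coe_image_Icc hab.le hcd.le, hμ, hμ, hμ]
  refine ⟨rfl, rfl, rfl, rfl, ?_⟩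
  simp only [AddCircle.toReal_volume_coe_image_Icc hab.le,
    AddCircle.toReal_volume_coe_image_Icc hcd.le,
    AddCircle.toReal_volume_coe_image_Icc (add_le_add hab.le hcd.le), add_sub_add_comm]
  exact min_add_eq_min_add_min zero_le_one (sub_nonneg.2 hab.le) (sub_nonneg.2 hcd.le)

theorem parallel_bohr_sets {G : Type*} [AddCommGroup G] [TopologicalSpace G]
    [IsTopologicalAddGroup G] [CompactSpace G]
    [MeasurableSpace G] [BorelSpace G]
    (μ : Measure G) [μ.IsAddHaarMeasure] [IsProbabilityMeasure μ]
    (φ : G →+ UnitAddCircle) (hφc : Continuous φ) (hφs : Function.Surjective φ)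
    (I J : Set UnitAddCircle)
    (hI : ∃ a b : ℝ, a < b ∧ I = (fun x : ℝ => (x : UnitAddCircle)) '' Set.Icc a b)
    (hJ : ∃ a b : ℝ, a < b ∧ J = (fun x : ℝ => (x : UnitAddCircle)) '' Set.Icc a b) :
    φ ⁻¹' I + φ ⁻¹' J = φ ⁻¹' (I + J) ∧
    μ (φ ⁻¹' I) = volume I ∧
    μ (φ ⁻¹' J) = volume J ∧
    μ (φ ⁻¹' I + φ ⁻¹' J) = volume (I + J) ∧
    ((volume I).toReal + (volume J).toReal ≤ 1 →
      (μ (φ ⁻¹' I + φ ⁻¹' J)).toReal = (μ (φ ⁻¹' I)).toReal + (μ (φ ⁻¹' J)).toReal) :=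
  parallel_bohr_sets_general μ φ hφc hφs I J hI hJ
end
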